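/- Let R = R₁ × R₂ be the product of G-graded commutative rings R₁ and R₂ (a G-graded ring with components (R₁)_α × (R₂)_α), let M₁ be a graded R₁-module and M₂ a graded R₂-module, and let M = M₁ × M₂ with the grading (M₁)_α × (M₂)_α, a graded R-module. Let C₂ be a non-zero graded submodule of M₂. Then C = 0 × C₂ is a graded strongly classical 2-absorbing second submodule of M if and only if C₂ is a graded strongly classical 2-absorbing second submodule of M₂. -/

import Mathlib

open Pointwise

section GradedDefs

variable {G : Type*} [Group G] [DecidableEq G] {R : Type*} [CommRing R]
  {M : Type*} [AddCommGroup M] [Module R M]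

/-- `R` is a `G`-graded commutative ring via the additive subgroups `𝒜 α`:
`R_α R_β ⊆ R_{αβ}` and `R = ⊕_{α ∈ G} R_α`. -/
structure IsRingGrading (𝒜 : G → AddSubgroup R) : Prop where
  one_mem : (1 : R) ∈ 𝒜 1
  mul_mem : ∀ ⦃α β : G⦄ ⦃r s : R⦄, r ∈ 𝒜 α → s ∈ 𝒜 β → r * s ∈ 𝒜 (α * β)
  isInternal : DirectSum.IsInternal 𝒜

/-- `M` is a graded module over the `G`-graded ring `R`:
`R_α M_β ⊆ M_{αβ}` and `M = ⊕_{α ∈ G} M_α`. -/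
structure IsModuleGrading (𝒜 : G → AddSubgroup R) (ℳ : G → AddSubgroup M) : Prop where
  smul_mem : ∀ ⦃α β : G⦄ ⦃r : R⦄ ⦃m : M⦄, r ∈ 𝒜 α → m ∈ ℳ β → r • m ∈ ℳ (α * β)
  isInternal : DirectSum.IsInternal ℳ

/-- A submodule `N` of `M` is a graded submodule iff `N = ⊕_{α ∈ G} (N ∩ M_α)`,
equivalently, every element of `N` is a sum of homogeneous elements of `N`. -/
def IsGradedSubmodule (ℳ : G → AddSubgroup M) (N : Submodule R M) : Prop :=
  ∀ n ∈ N, n ∈ Submodule.span R {m : M | m ∈ N ∧ ∃ α, m ∈ ℳ α}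

/-- An ideal `I` of `R` is a graded ideal iff `I = ⊕_{α ∈ G} (I ∩ R_α)`. -/
def IsGradedIdeal (𝒜 : G → AddSubgroup R) (I : Ideal R) : Prop :=
  ∀ r ∈ I, r ∈ Ideal.span {s : R | s ∈ I ∧ ∃ α, s ∈ 𝒜 α}

/-- A proper graded submodule `C` of `M` is completely graded irreducible if whenever
`C = ⋂_{λ ∈ Δ} C_λ` for a family of graded submodules `C_λ`, then `C = C_β` for some `β`. -/
def CompletelyGradedIrreducible (ℳ : G → AddSubgroup M) (C : Submodule R M) : Prop :=
  IsGradedSubmodule ℳ C ∧ C ≠ ⊤ ∧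
    ∀ S : Set (Submodule R M), (∀ D ∈ S, IsGradedSubmodule ℳ D) → C = sInf S → C ∈ S

/-- A non-zero graded submodule `C` of `M` is a graded classical 2-absorbing second submodule
if whenever `r, s, t ∈ h(R)`, `U` is a completely graded irreducible submodule of `M` and
`r·s·t·C ⊆ U`, then `r·s·C ⊆ U` or `s·t·C ⊆ U` or `r·t·C ⊆ U`. -/
def IsGrClassical2AbsorbingSecond (𝒜 : G → AddSubgroup R) (ℳ : G → AddSubgroup M)
    (C : Submodule R M) : Prop :=
  C ≠ ⊥ ∧ IsGradedSubmodule ℳ C ∧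
    ∀ r s t : R, (∃ α, r ∈ 𝒜 α) → (∃ β, s ∈ 𝒜 β) → (∃ γ, t ∈ 𝒜 γ) →
      ∀ U : Submodule R M, CompletelyGradedIrreducible ℳ U →
        r • s • t • C ≤ U → (r • s • C ≤ U ∨ s • t • C ≤ U ∨ r • t • C ≤ U)

/-- A non-zero graded submodule `C` of `M` is a graded strongly classical 2-absorbing second
submodule if whenever `r, s, t ∈ h(R)`, `U₁, U₂, U₃` are completely graded irreducible
submodules of `M` and `r·s·t·C ⊆ U₁ ∩ U₂ ∩ U₃`, then `r·s·C ⊆ U₁ ∩ U₂ ∩ U₃` or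
`s·t·C ⊆ U₁ ∩ U₂ ∩ U₃` or `r·t·C ⊆ U₁ ∩ U₂ ∩ U₃`. -/
def IsGrStronglyClassical2AbsorbingSecond (𝒜 : G → AddSubgroup R) (ℳ : G → AddSubgroup M)
    (C : Submodule R M) : Prop :=
  C ≠ ⊥ ∧ IsGradedSubmodule ℳ C ∧
    ∀ r s t : R, (∃ α, r ∈ 𝒜 α) → (∃ β, s ∈ 𝒜 β) → (∃ γ, t ∈ 𝒜 γ) →
      ∀ U₁ U₂ U₃ : Submodule R M, CompletelyGradedIrreducible ℳ U₁ →
        CompletelyGradedIrreducible ℳ U₂ → CompletelyGradedIrreducible ℳ U₃ →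
        r • s • t • C ≤ U₁ ⊓ U₂ ⊓ U₃ →
        (r • s • C ≤ U₁ ⊓ U₂ ⊓ U₃ ∨ s • t • C ≤ U₁ ⊓ U₂ ⊓ U₃ ∨ r • t • C ≤ U₁ ⊓ U₂ ⊓ U₃)

/-- A non-zero graded submodule `S` of `M` is a graded weakly second submodule if whenever
`r, s ∈ h(R)`, `N` is a graded submodule of `M` and `r·s·S ⊆ N`, then `r·S ⊆ N` or `s·S ⊆ N`. -/
def IsGrWeaklySecond (𝒜 : G → AddSubgroup R) (ℳ : G → AddSubgroup M)
    (S : Submodule R M) : Prop :=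
  S ≠ ⊥ ∧ IsGradedSubmodule ℳ S ∧
    ∀ r s : R, (∃ α, r ∈ 𝒜 α) → (∃ β, s ∈ 𝒜 β) →
      ∀ N : Submodule R M, IsGradedSubmodule ℳ N →
        r • s • S ≤ N → (r • S ≤ N ∨ s • S ≤ N)

/-- A proper graded ideal `I` of `R` is a graded 2-absorbing ideal if whenever `r, s, t ∈ h(R)`
with `r·s·t ∈ I`, then `r·s ∈ I` or `r·t ∈ I` or `s·t ∈ I`. -/
def IsGr2AbsorbingIdeal (𝒜 : G → AddSubgroup R) (I : Ideal R) : Prop :=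
  I ≠ ⊤ ∧ IsGradedIdeal 𝒜 I ∧
    ∀ r s t : R, (∃ α, r ∈ 𝒜 α) → (∃ β, s ∈ 𝒜 β) → (∃ γ, t ∈ 𝒜 γ) →
      r * s * t ∈ I → (r * s ∈ I ∨ r * t ∈ I ∨ s * t ∈ I)

end GradedDefs

section ProdSetup

variable {R₁ R₂ : Type*} [CommRing R₁] [CommRing R₂]
  {M₁ M₂ : Type*} [AddCommGroup M₁] [Module R₁ M₁] [AddCommGroup M₂] [Module R₂ M₂]

/-- The componentwise action of `R₁ × R₂` on `M₁ × M₂`. -/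
instance prodPairSMul : SMul (R₁ × R₂) (M₁ × M₂) :=
  ⟨fun r m => (r.1 • m.1, r.2 • m.2)⟩

/-- `M₁ × M₂` is a module over the product ring `R₁ × R₂`, acting componentwise. -/
instance prodPairModule : Module (R₁ × R₂) (M₁ × M₂) where
  one_smul m := Prod.ext (one_smul _ _) (one_smul _ _)
  mul_smul r s m := Prod.ext (mul_smul _ _ _) (mul_smul _ _ _)
  smul_zero r := Prod.ext (smul_zero _) (smul_zero _)
  smul_add r m n := Prod.ext (smul_add _ _ _) (smul_add _ _ _)
  add_smul r s m := Prod.ext (add_smul _ _ _) (add_smul _ _ _)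
  zero_smul m := Prod.ext (zero_smul _ _) (zero_smul _ _)

/-- The submodule `C₁ × C₂` of the `(R₁ × R₂)`-module `M₁ × M₂`. -/
def prodPairSubmodule (C₁ : Submodule R₁ M₁) (C₂ : Submodule R₂ M₂) :
    Submodule (R₁ × R₂) (M₁ × M₂) where
  carrier := (C₁ : Set M₁) ×ˢ (C₂ : Set M₂)
  add_mem' ha hb := ⟨C₁.add_mem ha.1 hb.1, C₂.add_mem ha.2 hb.2⟩
  zero_mem' := ⟨C₁.zero_mem, C₂.zero_mem⟩
  smul_mem' r m hm := ⟨C₁.smul_mem r.1 hm.1, C₂.smul_mem r.2 hm.2⟩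

end ProdSetup

/-!
Over `R₁ × R₂` the idempotents `(1, 0)` and `(0, 1)` split every submodule of `M₁ × M₂` as a
product `A × B`, which is graded exactly when both factors are. Hence a completely graded
irreducible submodule of `M₁ × M₂` is `U₁ × M₂` or `M₁ × U₂` with `Uᵢ` completely graded
irreducible, and `(a, b) • (0 × C₂) = 0 × b • C₂`. The absorbing condition for `0 × C₂` against
`V₁ ∩ V₂ ∩ V₃` is therefore the condition for `C₂` against the second components of the `Vᵢ`;
those equal to `M₂` can be replaced by one of the others without changing the intersection.
-/

section ProdPair

variable {R₁ R₂ : Type*} [CommRing R₁] [CommRing R₂]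
  {M₁ M₂ : Type*} [AddCommGroup M₁] [Module R₁ M₁] [AddCommGroup M₂] [Module R₂ M₂]

lemma prodPair_smul_def (r : R₁ × R₂) (x : M₁ × M₂) : r • x = (r.1 • x.1, r.2 • x.2) := rfl

@[simp]
lemma mem_prodPairSubmodule {A : Submodule R₁ M₁} {B : Submodule R₂ M₂} {x : M₁ × M₂} :
    x ∈ prodPairSubmodule A B ↔ x.1 ∈ A ∧ x.2 ∈ B := Iff.rfl

def pairFst (D : Submodule (R₁ × R₂) (M₁ × M₂)) : Submodule R₁ M₁ where
  carrier := {a | (a, 0) ∈ D}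
  zero_mem' := D.zero_mem
  add_mem' ha hb := by simpa using D.add_mem ha hb
  smul_mem' r _ ha := by simpa [prodPair_smul_def] using D.smul_mem (r, 0) ha

def pairSnd (D : Submodule (R₁ × R₂) (M₁ × M₂)) : Submodule R₂ M₂ where
  carrier := {b | (0, b) ∈ D}
  zero_mem' := D.zero_mem
  add_mem' ha hb := by simpa using D.add_mem ha hb
  smul_mem' r _ hb := by simpa [prodPair_smul_def] using D.smul_mem (0, r) hb

@[simp]
lemma mem_pairFst {D : Submodule (R₁ × R₂) (M₁ × M₂)} {a : M₁} :
    a ∈ pairFst D ↔ (a, (0 : M₂)) ∈ D := Iff.rfl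

@[simp]
lemma mem_pairSnd {D : Submodule (R₁ × R₂) (M₁ × M₂)} {b : M₂} :
    b ∈ pairSnd D ↔ ((0 : M₁), b) ∈ D := Iff.rfl

lemma fst_mem_pairFst {D : Submodule (R₁ × R₂) (M₁ × M₂)} {x : M₁ × M₂} (hx : x ∈ D) :
    x.1 ∈ pairFst D := by
  simpa [prodPair_smul_def] using D.smul_mem (1, 0) hx

lemma snd_mem_pairSnd {D : Submodule (R₁ × R₂) (M₁ × M₂)} {x : M₁ × M₂} (hx : x ∈ D) :
    x.2 ∈ pairSnd D := by
  simpa [prodPair_smul_def] using D.smul_mem (0, 1) hx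

/-- Since `(1, 0)` and `(0, 1)` act as the two projections, every submodule of `M₁ × M₂` over
`R₁ × R₂` is the product of its two components. -/
def prodPairOrderIso :
    Submodule R₁ M₁ × Submodule R₂ M₂ ≃o Submodule (R₁ × R₂) (M₁ × M₂) where
  toFun p := prodPairSubmodule p.1 p.2
  invFun D := (pairFst D, pairSnd D)
  left_inv p := by ext <;> simp
  right_inv D := by
    ext x
    change x ∈ prodPairSubmodule (pairFst D) (pairSnd D) ↔ x ∈ D
    refine ⟨fun hx => ?_, fun hx => ⟨fst_mem_pairFst hx, snd_mem_pairSnd hx⟩⟩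
    simpa using D.add_mem hx.1 hx.2
  map_rel_iff' {p q} := by
    refine ⟨fun h => ⟨fun a ha => ?_, fun b hb => ?_⟩, fun h x hx => ⟨h.1 hx.1, h.2 hx.2⟩⟩
    · exact (h (show (a, 0) ∈ prodPairSubmodule p.1 p.2 from ⟨ha, zero_mem _⟩)).1
    · exact (h (show (0, b) ∈ prodPairSubmodule p.1 p.2 from ⟨zero_mem _, hb⟩)).2

@[simp]
lemma prodPairOrderIso_apply (p : Submodule R₁ M₁ × Submodule R₂ M₂) :
    prodPairOrderIso p = prodPairSubmodule p.1 p.2 := rfl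

@[simp]
lemma prodPairOrderIso_symm_apply (D : Submodule (R₁ × R₂) (M₁ × M₂)) :
    prodPairOrderIso.symm D = (pairFst D, pairSnd D) := rfl

lemma prodPairSubmodule_pairFst_pairSnd (D : Submodule (R₁ × R₂) (M₁ × M₂)) :
    prodPairSubmodule (pairFst D) (pairSnd D) = D :=
  prodPairOrderIso.apply_symm_apply D

@[simp]
lemma pairFst_prodPairSubmodule (A : Submodule R₁ M₁) (B : Submodule R₂ M₂) :
    pairFst (prodPairSubmodule A B) = A :=
  congrArg Prod.fst (prodPairOrderIso.symm_apply_apply (A, B))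

@[simp]
lemma pairSnd_prodPairSubmodule (A : Submodule R₁ M₁) (B : Submodule R₂ M₂) :
    pairSnd (prodPairSubmodule A B) = B :=
  congrArg Prod.snd (prodPairOrderIso.symm_apply_apply (A, B))

@[simp]
lemma prodPairSubmodule_eq_top_iff {A : Submodule R₁ M₁} {B : Submodule R₂ M₂} :
    prodPairSubmodule A B = ⊤ ↔ A = ⊤ ∧ B = ⊤ := by
  simpa [Prod.ext_iff] using map_eq_top_iff prodPairOrderIso (a := (A, B))

@[simp]
lemma prodPairSubmodule_eq_bot_iff {A : Submodule R₁ M₁} {B : Submodule R₂ M₂} :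
    prodPairSubmodule A B = ⊥ ↔ A = ⊥ ∧ B = ⊥ := by
  simpa [Prod.ext_iff] using map_eq_bot_iff prodPairOrderIso (a := (A, B))

lemma prodPairSubmodule_inf (A A' : Submodule R₁ M₁) (B B' : Submodule R₂ M₂) :
    prodPairSubmodule A B ⊓ prodPairSubmodule A' B' = prodPairSubmodule (A ⊓ A') (B ⊓ B') :=
  (prodPairOrderIso.map_inf (A, B) (A', B')).symm

lemma prodPairSubmodule_bot_le_iff {B : Submodule R₂ M₂} {D : Submodule (R₁ × R₂) (M₁ × M₂)} :
    prodPairSubmodule ⊥ B ≤ D ↔ B ≤ pairSnd D := by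
  simpa using (prodPairOrderIso.le_symm_apply (x := (⊥, B)) (y := D)).symm

@[simp]
lemma pairSnd_inf (D D' : Submodule (R₁ × R₂) (M₁ × M₂)) :
    pairSnd (D ⊓ D') = pairSnd D ⊓ pairSnd D' := rfl

lemma pairSnd_sInf (S : Set (Submodule (R₁ × R₂) (M₁ × M₂))) :
    pairSnd (sInf S) = sInf (pairSnd '' S) := by
  ext b
  simp [Submodule.mem_sInf]

lemma prodPairSubmodule_top_sInf (S : Set (Submodule R₂ M₂)) :
    prodPairSubmodule (⊤ : Submodule R₁ M₁) (sInf S) = sInf (prodPairSubmodule ⊤ '' S) := by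
  ext x
  simp [Submodule.mem_sInf]

lemma smul_prodPairSubmodule (r : R₁ × R₂) (A : Submodule R₁ M₁) (B : Submodule R₂ M₂) :
    r • prodPairSubmodule A B = prodPairSubmodule (r.1 • A) (r.2 • B) := by
  ext x
  simp only [Submodule.mem_smul_pointwise_iff_exists, mem_prodPairSubmodule]
  constructor
  · rintro ⟨y, ⟨hy₁, hy₂⟩, rfl⟩
    exact ⟨⟨y.1, hy₁, rfl⟩, ⟨y.2, hy₂, rfl⟩⟩
  · rintro ⟨⟨a, ha, ha'⟩, ⟨b, hb, hb'⟩⟩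
    exact ⟨(a, b), ⟨ha, hb⟩, Prod.ext ha' hb'⟩

lemma smul_prodPairSubmodule_bot (r : R₁ × R₂) (B : Submodule R₂ M₂) :
    r • prodPairSubmodule (⊥ : Submodule R₁ M₁) B = prodPairSubmodule ⊥ (r.2 • B) := by
  rw [smul_prodPairSubmodule, Submodule.smul_bot']

end ProdPair

section Graded

variable {G : Type*} {R M : Type*} [CommRing R] [AddCommGroup M] [Module R M]

lemma isGradedSubmodule_top {ℳ : G → AddSubgroup M} [DecidableEq G]
    (h : DirectSum.IsInternal ℳ) : IsGradedSubmodule ℳ (⊤ : Submodule R M) := by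
  classical
  intro m _
  obtain ⟨x, rfl⟩ := h.2 m
  rw [DirectSum.coeAddMonoidHom_eq_dfinsuppSum]
  exact Submodule.sum_mem _ fun i _ => Submodule.subset_span ⟨trivial, i, (x i).2⟩

lemma isGradedSubmodule_bot (ℳ : G → AddSubgroup M) :
    IsGradedSubmodule ℳ (⊥ : Submodule R M) := by
  intro m hm
  rw [Submodule.mem_bot] at hm
  simp [hm]

variable {R₁ R₂ : Type*} [CommRing R₁] [CommRing R₂]
  {M₁ M₂ : Type*} [AddCommGroup M₁] [Module R₁ M₁] [AddCommGroup M₂] [Module R₂ M₂]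
  {ℳ₁ : G → AddSubgroup M₁} {ℳ₂ : G → AddSubgroup M₂}

lemma isGradedSubmodule_pairFst {D : Submodule (R₁ × R₂) (M₁ × M₂)}
    (hD : IsGradedSubmodule (fun α => (ℳ₁ α).prod (ℳ₂ α)) D) :
    IsGradedSubmodule ℳ₁ (pairFst D) := by
  intro a ha
  have hspan : Submodule.span (R₁ × R₂) {m | m ∈ D ∧ ∃ α, m ∈ (ℳ₁ α).prod (ℳ₂ α)} ≤
      prodPairSubmodule (Submodule.span R₁ {m | m ∈ pairFst D ∧ ∃ α, m ∈ ℳ₁ α}) ⊤ :=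
    Submodule.span_le.mpr fun y ⟨hy, α, hα⟩ =>
      ⟨Submodule.subset_span ⟨fst_mem_pairFst hy, α, hα.1⟩, trivial⟩
  exact (hspan (hD _ ha)).1

lemma isGradedSubmodule_pairSnd {D : Submodule (R₁ × R₂) (M₁ × M₂)}
    (hD : IsGradedSubmodule (fun α => (ℳ₁ α).prod (ℳ₂ α)) D) :
    IsGradedSubmodule ℳ₂ (pairSnd D) := by
  intro b hb
  have hspan : Submodule.span (R₁ × R₂) {m | m ∈ D ∧ ∃ α, m ∈ (ℳ₁ α).prod (ℳ₂ α)} ≤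
      prodPairSubmodule ⊤ (Submodule.span R₂ {m | m ∈ pairSnd D ∧ ∃ α, m ∈ ℳ₂ α}) :=
    Submodule.span_le.mpr fun y ⟨hy, α, hα⟩ =>
      ⟨trivial, Submodule.subset_span ⟨snd_mem_pairSnd hy, α, hα.2⟩⟩
  exact (hspan (hD _ hb)).2

lemma isGradedSubmodule_prodPairSubmodule {A : Submodule R₁ M₁} {B : Submodule R₂ M₂}
    (hA : IsGradedSubmodule ℳ₁ A) (hB : IsGradedSubmodule ℳ₂ B) :
    IsGradedSubmodule (fun α => (ℳ₁ α).prod (ℳ₂ α)) (prodPairSubmodule A B) := by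
  intro x hx
  set T := {m | m ∈ prodPairSubmodule A B ∧ ∃ α, m ∈ (ℳ₁ α).prod (ℳ₂ α)}
  have hA' : Submodule.span R₁ {m | m ∈ A ∧ ∃ α, m ∈ ℳ₁ α} ≤
      pairFst (Submodule.span (R₁ × R₂) T) :=
    Submodule.span_le.mpr fun a ⟨ha, α, hα⟩ =>
      Submodule.subset_span ⟨⟨ha, zero_mem B⟩, α, hα, zero_mem _⟩
  have hB' : Submodule.span R₂ {m | m ∈ B ∧ ∃ α, m ∈ ℳ₂ α} ≤
      pairSnd (Submodule.span (R₁ × R₂) T) :=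
    Submodule.span_le.mpr fun b ⟨hb, α, hα⟩ =>
      Submodule.subset_span ⟨⟨zero_mem A, hb⟩, α, zero_mem _, hα⟩
  simpa using add_mem (mem_pairFst.mp (hA' (hA x.1 hx.1))) (mem_pairSnd.mp (hB' (hB x.2 hx.2)))

lemma isGradedSubmodule_prodPairSubmodule_iff {A : Submodule R₁ M₁} {B : Submodule R₂ M₂} :
    IsGradedSubmodule (fun α => (ℳ₁ α).prod (ℳ₂ α)) (prodPairSubmodule A B) ↔
      IsGradedSubmodule ℳ₁ A ∧ IsGradedSubmodule ℳ₂ B := by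
  refine ⟨fun h => ⟨?_, ?_⟩, fun h => isGradedSubmodule_prodPairSubmodule h.1 h.2⟩
  · simpa using isGradedSubmodule_pairFst h
  · simpa using isGradedSubmodule_pairSnd h

end Graded

section Irreducible

variable {G : Type*} [DecidableEq G]
  {R₁ R₂ : Type*} [CommRing R₁] [CommRing R₂]
  {M₁ M₂ : Type*} [AddCommGroup M₁] [Module R₁ M₁] [AddCommGroup M₂] [Module R₂ M₂]
  {ℳ₁ : G → AddSubgroup M₁} {ℳ₂ : G → AddSubgroup M₂}

lemma completelyGradedIrreducible_top_prodPairSubmodule_iff (h₁ : DirectSum.IsInternal ℳ₁)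
    {B : Submodule R₂ M₂} :
    CompletelyGradedIrreducible (fun α => (ℳ₁ α).prod (ℳ₂ α))
        (prodPairSubmodule (⊤ : Submodule R₁ M₁) B) ↔
      CompletelyGradedIrreducible ℳ₂ B := by
  simp only [CompletelyGradedIrreducible, isGradedSubmodule_prodPairSubmodule_iff,
    isGradedSubmodule_top h₁, true_and, ne_eq, prodPairSubmodule_eq_top_iff]
  refine and_congr_right fun _ => and_congr_right fun _ =>
    ⟨fun h S hS hBS => ?_, fun h S hS hBS => ?_⟩
  · obtain ⟨D, hD, hDB⟩ := h (prodPairSubmodule (⊤ : Submodule R₁ M₁) '' S)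
      (by
        rintro _ ⟨D, hD, rfl⟩
        exact isGradedSubmodule_prodPairSubmodule (isGradedSubmodule_top h₁) (hS D hD))
      (by rw [hBS, prodPairSubmodule_top_sInf])
    rwa [← pairSnd_prodPairSubmodule (⊤ : Submodule R₁ M₁) B, ← hDB, pairSnd_prodPairSubmodule]
  · obtain ⟨D, hD, hDB⟩ := h (pairSnd '' S)
      (by
        rintro _ ⟨D, hD, rfl⟩
        exact isGradedSubmodule_pairSnd (hS D hD))
      (by rw [← pairSnd_sInf, ← hBS, pairSnd_prodPairSubmodule])
    have hBD : prodPairSubmodule ⊤ B ≤ D := hBS ▸ sInf_le hD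
    have hfst : pairFst D = ⊤ := top_unique fun a _ => hBD ⟨trivial, zero_mem B⟩
    rwa [← prodPairSubmodule_pairFst_pairSnd D, hfst, hDB] at hD

/-- `U = (pairFst U × M₂) ⊓ (M₁ × pairSnd U)` is a meet of graded submodules, so irreducibility
forces it to be one of them. -/
lemma CompletelyGradedIrreducible.pairSnd_or_eq_top (h₁ : DirectSum.IsInternal ℳ₁)
    (h₂ : DirectSum.IsInternal ℳ₂) {U : Submodule (R₁ × R₂) (M₁ × M₂)}
    (hU : CompletelyGradedIrreducible (fun α => (ℳ₁ α).prod (ℳ₂ α)) U) :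
    CompletelyGradedIrreducible ℳ₂ (pairSnd U) ∨ pairSnd U = ⊤ := by
  have hgr := isGradedSubmodule_prodPairSubmodule_iff.mp
    ((prodPairSubmodule_pairFst_pairSnd U).symm ▸ hU.1)
  have hmem := hU.2.2 {prodPairSubmodule (pairFst U) ⊤, prodPairSubmodule ⊤ (pairSnd U)}
    (by
      rintro D (rfl | rfl)
      · exact isGradedSubmodule_prodPairSubmodule hgr.1 (isGradedSubmodule_top h₂)
      · exact isGradedSubmodule_prodPairSubmodule (isGradedSubmodule_top h₁) hgr.2)
    (by
      rw [sInf_pair, prodPairSubmodule_inf, inf_top_eq, top_inf_eq,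
        prodPairSubmodule_pairFst_pairSnd])
  rcases hmem with hU₁ | hU₂
  · right
    rw [hU₁, pairSnd_prodPairSubmodule]
  · left
    rw [hU₂] at hU
    exact (completelyGradedIrreducible_top_prodPairSubmodule_iff h₁).mp hU

end Irreducible

/-- A `⊤` entry can be replaced by any other entry without changing the meet. -/
lemma inf_inf_eq_top_or_exists {α : Type*} [SemilatticeInf α] [OrderTop α] {P : α → Prop}
    {a b c : α} (ha : P a ∨ a = ⊤) (hb : P b ∨ b = ⊤) (hc : P c ∨ c = ⊤) :
    a ⊓ b ⊓ c = ⊤ ∨ ∃ a' b' c', P a' ∧ P b' ∧ P c' ∧ a ⊓ b ⊓ c = a' ⊓ b' ⊓ c' := by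
  rcases ha with ha | rfl <;> rcases hb with hb | rfl <;> rcases hc with hc | rfl
  exacts [.inr ⟨a, b, c, ha, hb, hc, rfl⟩, .inr ⟨a, b, b, ha, hb, hb, by simp⟩,
    .inr ⟨a, a, c, ha, ha, hc, by simp⟩, .inr ⟨a, a, a, ha, ha, ha, by simp⟩,
    .inr ⟨b, b, c, hb, hb, hc, by simp⟩, .inr ⟨b, b, b, hb, hb, hb, by simp⟩,
    .inr ⟨c, c, c, hc, hc, hc, by simp⟩, .inl (by simp)]

section TwoAbsorbs

variable {G : Type*} {R M : Type*} [CommRing R] [AddCommGroup M] [Module R M]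

def TwoAbsorbs (r s t : R) (C N : Submodule R M) : Prop :=
  r • s • t • C ≤ N → r • s • C ≤ N ∨ s • t • C ≤ N ∨ r • t • C ≤ N

lemma twoAbsorbs_top (r s t : R) (C : Submodule R M) : TwoAbsorbs r s t C ⊤ :=
  fun _ => .inl le_top

lemma IsGrStronglyClassical2AbsorbingSecond.twoAbsorbs {𝒜 : G → AddSubgroup R}
    {ℳ : G → AddSubgroup M} {C : Submodule R M}
    (hC : IsGrStronglyClassical2AbsorbingSecond 𝒜 ℳ C) {r s t : R}
    (hr : ∃ α, r ∈ 𝒜 α) (hs : ∃ β, s ∈ 𝒜 β) (ht : ∃ γ, t ∈ 𝒜 γ) {U₁ U₂ U₃ : Submodule R M}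
    (h₁ : CompletelyGradedIrreducible ℳ U₁) (h₂ : CompletelyGradedIrreducible ℳ U₂)
    (h₃ : CompletelyGradedIrreducible ℳ U₃) :
    TwoAbsorbs r s t C (U₁ ⊓ U₂ ⊓ U₃) :=
  hC.2.2 r s t hr hs ht U₁ U₂ U₃ h₁ h₂ h₃

lemma IsGrStronglyClassical2AbsorbingSecond.twoAbsorbs_inf_inf {𝒜 : G → AddSubgroup R}
    {ℳ : G → AddSubgroup M} {C : Submodule R M}
    (hC : IsGrStronglyClassical2AbsorbingSecond 𝒜 ℳ C) {r s t : R}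
    (hr : ∃ α, r ∈ 𝒜 α) (hs : ∃ β, s ∈ 𝒜 β) (ht : ∃ γ, t ∈ 𝒜 γ) {B₁ B₂ B₃ : Submodule R M}
    (h₁ : CompletelyGradedIrreducible ℳ B₁ ∨ B₁ = ⊤)
    (h₂ : CompletelyGradedIrreducible ℳ B₂ ∨ B₂ = ⊤)
    (h₃ : CompletelyGradedIrreducible ℳ B₃ ∨ B₃ = ⊤) :
    TwoAbsorbs r s t C (B₁ ⊓ B₂ ⊓ B₃) := by
  obtain htop | ⟨U₁, U₂, U₃, hU₁, hU₂, hU₃, hB⟩ := inf_inf_eq_top_or_exists h₁ h₂ h₃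
  · exact htop ▸ twoAbsorbs_top r s t C
  · exact hB ▸ hC.twoAbsorbs hr hs ht hU₁ hU₂ hU₃

variable {R₁ R₂ : Type*} [CommRing R₁] [CommRing R₂]
  {M₁ M₂ : Type*} [AddCommGroup M₁] [Module R₁ M₁] [AddCommGroup M₂] [Module R₂ M₂]

lemma twoAbsorbs_prodPairSubmodule_bot_iff {r s t : R₁ × R₂} {C : Submodule R₂ M₂}
    {N : Submodule (R₁ × R₂) (M₁ × M₂)} :
    TwoAbsorbs r s t (prodPairSubmodule ⊥ C) N ↔ TwoAbsorbs r.2 s.2 t.2 C (pairSnd N) := by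
  simp only [TwoAbsorbs, smul_prodPairSubmodule_bot, prodPairSubmodule_bot_le_iff]

end TwoAbsorbs

theorem stmt18_general {G : Type*} [Group G] [DecidableEq G]
    {R₁ R₂ : Type*} [CommRing R₁] [CommRing R₂]
    {M₁ M₂ : Type*} [AddCommGroup M₁] [Module R₁ M₁] [AddCommGroup M₂] [Module R₂ M₂]
    (𝒜₁ : G → AddSubgroup R₁) (𝒜₂ : G → AddSubgroup R₂)
    (ℳ₁ : G → AddSubgroup M₁) (ℳ₂ : G → AddSubgroup M₂)
    (hℳ₁ : IsModuleGrading 𝒜₁ ℳ₁) (hℳ₂ : IsModuleGrading 𝒜₂ ℳ₂)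
    (C₂ : Submodule R₂ M₂) (hC₂0 : C₂ ≠ ⊥) (hC₂gr : IsGradedSubmodule ℳ₂ C₂) :
    IsGrStronglyClassical2AbsorbingSecond (fun α => (𝒜₁ α).prod (𝒜₂ α))
        (fun α => (ℳ₁ α).prod (ℳ₂ α)) (prodPairSubmodule (⊥ : Submodule R₁ M₁) C₂) ↔
      IsGrStronglyClassical2AbsorbingSecond 𝒜₂ ℳ₂ C₂ := by
  have hcgi {B : Submodule R₂ M₂} (hB : CompletelyGradedIrreducible ℳ₂ B) :
      CompletelyGradedIrreducible (fun α => (ℳ₁ α).prod (ℳ₂ α))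
        (prodPairSubmodule (⊤ : Submodule R₁ M₁) B) :=
    (completelyGradedIrreducible_top_prodPairSubmodule_iff hℳ₁.isInternal).mpr hB
  constructor
  · intro h
    refine ⟨hC₂0, hC₂gr, fun r s t hr hs ht U₁ U₂ U₃ hU₁ hU₂ hU₃ => ?_⟩
    have hhom {x : R₂} (hx : ∃ α, x ∈ 𝒜₂ α) : ∃ α, ((0 : R₁), x) ∈ (𝒜₁ α).prod (𝒜₂ α) :=
      hx.imp fun _ h => ⟨zero_mem _, h⟩
    have key := h.twoAbsorbs (hhom hr) (hhom hs) (hhom ht) (hcgi hU₁) (hcgi hU₂) (hcgi hU₃)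
    rwa [twoAbsorbs_prodPairSubmodule_bot_iff, pairSnd_inf, pairSnd_inf,
      pairSnd_prodPairSubmodule, pairSnd_prodPairSubmodule, pairSnd_prodPairSubmodule] at key
  · intro h
    refine ⟨by simpa using hC₂0, isGradedSubmodule_prodPairSubmodule (isGradedSubmodule_bot ℳ₁)
      hC₂gr, fun r s t hr hs ht U₁ U₂ U₃ hU₁ hU₂ hU₃ => ?_⟩
    change TwoAbsorbs r s t _ _
    rw [twoAbsorbs_prodPairSubmodule_bot_iff, pairSnd_inf, pairSnd_inf]
    exact h.twoAbsorbs_inf_inf (hr.imp fun _ h => h.2) (hs.imp fun _ h => h.2)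
      (ht.imp fun _ h => h.2) (hU₁.pairSnd_or_eq_top hℳ₁.isInternal hℳ₂.isInternal)
      (hU₂.pairSnd_or_eq_top hℳ₁.isInternal hℳ₂.isInternal)
      (hU₃.pairSnd_or_eq_top hℳ₁.isInternal hℳ₂.isInternal)

theorem stmt18 {G : Type*} [Group G] [DecidableEq G]
    {R₁ R₂ : Type*} [CommRing R₁] [CommRing R₂]
    {M₁ M₂ : Type*} [AddCommGroup M₁] [Module R₁ M₁] [AddCommGroup M₂] [Module R₂ M₂]
    (𝒜₁ : G → AddSubgroup R₁) (𝒜₂ : G → AddSubgroup R₂)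
    (ℳ₁ : G → AddSubgroup M₁) (ℳ₂ : G → AddSubgroup M₂)
    (h𝒜₁ : IsRingGrading 𝒜₁) (h𝒜₂ : IsRingGrading 𝒜₂)
    (hℳ₁ : IsModuleGrading 𝒜₁ ℳ₁) (hℳ₂ : IsModuleGrading 𝒜₂ ℳ₂)
    (C₂ : Submodule R₂ M₂) (hC₂0 : C₂ ≠ ⊥) (hC₂gr : IsGradedSubmodule ℳ₂ C₂) :
    IsGrStronglyClassical2AbsorbingSecond (fun α => (𝒜₁ α).prod (𝒜₂ α))
        (fun α => (ℳ₁ α).prod (ℳ₂ α)) (prodPairSubmodule (⊥ : Submodule R₁ M₁) C₂) ↔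
      IsGrStronglyClassical2AbsorbingSecond 𝒜₂ ℳ₂ C₂ :=
  stmt18_general 𝒜₁ 𝒜₂ ℳ₁ ℳ₂ hℳ₁ hℳ₂ C₂ hC₂0 hC₂gr
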